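/- Let G be a 3-connected simple graph and let T be a set of two edges incident to a vertex of G of degree at least 4. Then the 3-point splitting graph G'_T is 3-connected. -/

import Mathlib

open Set

/-- A graph is `n`-connected if it has more than `n` vertices and deleting any fewer than
`n` vertices leaves a connected graph. -/
def GraphNConnected {V : Type*} [Fintype V] (n : ℕ) (G : SimpleGraph V) : Prop :=
  n < Fintype.card V ∧ ∀ S : Set V, S.ncard < n → (G.induce Sᶜ).Connected

/-- The point splitting of `G` at a vertex `v` with respect to a set `T` of edges incident
to `v`.  The vertex `v` is replaced by two adjacent vertices: `some v` (named `u`), which is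
joined to the other endpoints of the edges of `T`, and a new vertex `none` (named `w`),
which is joined to all remaining neighbours of `v`. -/
def pointSplit {V : Type*} (G : SimpleGraph V) (v : V) (T : Set (Sym2 V)) :
    SimpleGraph (Option V) where
  Adj x y :=
    match x, y with
    | some x, some y =>
        (x ≠ v ∧ y ≠ v ∧ G.Adj x y) ∨ (x = v ∧ y ≠ v ∧ s(v, y) ∈ T) ∨
          (y = v ∧ x ≠ v ∧ s(v, x) ∈ T)
    | some x, none => x = v ∨ (x ≠ v ∧ G.Adj v x ∧ s(v, x) ∉ T)
    | none, some y => y = v ∨ (y ≠ v ∧ G.Adj v y ∧ s(v, y) ∉ T)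
    | none, none => False
  symm := by
    constructor
    rintro (x | x) (y | y) h
    · exact h
    · exact h
    · exact h
    · simp only at h ⊢
      rcases h with ⟨hx, hy, hadj⟩ | ⟨hx, hy, hmem⟩ | ⟨hy, hx, hmem⟩
      · exact Or.inl ⟨hy, hx, hadj.symm⟩
      · exact Or.inr (Or.inr ⟨hx, hy, hmem⟩)
      · exact Or.inr (Or.inl ⟨hy, hx, hmem⟩)
  loopless := by
    constructor
    rintro (x | x) h
    · exact h
    simp only at h
    rcases h with ⟨_, _, hadj⟩ | ⟨hx, hy, _⟩ | ⟨hx, hy, _⟩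
    · exact G.loopless.irrefl x hadj
    · exact hy hx
    · exact hy hx


/-!
Write `u = some v` and `w = none`, and delete a set `S` of at most two vertices from `G'_T`.
If `S` contains `u` or `w`, then `S` together with `v` meets at most two vertices of `G`, so
deleting them from `G` leaves a connected graph, which embeds in `G'_T - S` via `some`. The
surviving split vertex is attached to it: `u` through an endpoint of `T` outside `S` (there are
two), `w` through a neighbour of `v` outside `S` and not joined to `v` by `T` (`v` has at least
four neighbours). Otherwise `G - S` is connected and maps onto `G'_T - S` by sending `v` to `w`
and fixing every other vertex; an edge `vx ∈ T` of `G` becomes the path `w u x`.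
-/

namespace SimpleGraph

variable {α β : Type*} {G : SimpleGraph α} {H : SimpleGraph β}

theorem Reachable.of_adj_reachable (f : α → β)
    (hf : ∀ ⦃a b⦄, G.Adj a b → H.Reachable (f a) (f b)) {a b : α} (h : G.Reachable a b) :
    H.Reachable (f a) (f b) := by
  rw [reachable_iff_reflTransGen] at h ⊢
  exact h.lift' f fun a b hab => (reachable_iff_reflTransGen _ _).mp (hf hab)

theorem Connected.of_adj_reachable (hG : G.Connected) (f : α → β)
    (hf : ∀ ⦃a b⦄, G.Adj a b → H.Reachable (f a) (f b))
    (hcover : ∀ y, ∃ x, H.Reachable (f x) y) : H.Connected := by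
  obtain ⟨x₀⟩ := hG.nonempty
  refine (connected_iff_exists_forall_reachable (G := H)).mpr ⟨f x₀, fun y => ?_⟩
  obtain ⟨x, hx⟩ := hcover y
  exact ((hG x₀ x).of_adj_reachable f hf).trans hx

theorem exists_adj_notMem_of_ncard_lt_degree {a : α} [Fintype (G.neighborSet a)] {B : Set α}
    (hB : B.ncard < G.degree a) (hBfin : B.Finite := by toFinite_tac) :
    ∃ x, G.Adj a x ∧ x ∉ B := by
  rw [← card_neighborSet_eq_degree, ← Nat.card_eq_fintype_card, Nat.card_coe_set_eq] at hB
  exact exists_mem_notMem_of_ncard_lt_ncard hB hBfin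

end SimpleGraph

namespace Set

variable {α : Type*} {S : Set (Option α)}

theorem ncard_preimage_some_le (hS : S.Finite) : (some ⁻¹' S).ncard ≤ S.ncard :=
  ncard_le_ncard_of_injOn some (fun _ h => h) (Option.some_injective α).injOn hS

theorem ncard_preimage_some_add_one_le (hS : S.Finite) (hnone : none ∈ S) :
    (some ⁻¹' S).ncard + 1 ≤ S.ncard := by
  calc (some ⁻¹' S).ncard + 1 = (insert none (some '' (some ⁻¹' S))).ncard := by
        rw [ncard_insert_of_notMem (by simp)
            ((hS.preimage (Option.some_injective α).injOn).image _),
          ncard_image_of_injective _ (Option.some_injective α)]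
    _ ≤ S.ncard := ncard_le_ncard (by rintro _ (rfl | ⟨x, hx, rfl⟩) <;> assumption) hS

end Set

theorem Sym2.ncard_setOf_mk_mem {α : Type*} {v : α} {T : Set (Sym2 α)} (hTv : ∀ e ∈ T, v ∈ e) :
    {t | s(v, t) ∈ T}.ncard = T.ncard :=
  ncard_preimage_of_injective_subset_range (Sym2.mkEmbedding v).injective
    fun e he => (Sym2.mem_iff_exists.mp (hTv e he)).imp fun _ ht => ht.symm

namespace SimpleGraph

variable {V : Type*} {G : SimpleGraph V} {v : V} {T : Set (Sym2 V)} {S : Set (Option V)}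

theorem Connected.pointSplit_induce_of_insert_preimage
    (hA : (G.induce (insert v (some ⁻¹' S))ᶜ).Connected)
    (hu : some v ∉ S → ∃ t ≠ v, some t ∉ S ∧ s(v, t) ∈ T)
    (hw : none ∉ S → ∃ x ≠ v, some x ∉ S ∧ G.Adj v x ∧ s(v, x) ∉ T) :
    ((pointSplit G v T).induce Sᶜ).Connected := by
  have hmem (x : V) : x ∈ (insert v (some ⁻¹' S))ᶜ ↔ x ≠ v ∧ some x ∉ S := by simp [not_or]
  refine hA.of_adj_reachable (fun x => ⟨some x, ((hmem x).1 x.2).2⟩)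
    (fun x y hxy => Adj.reachable (Or.inl ⟨((hmem x).1 x.2).1, ((hmem y).1 y.2).1, hxy⟩)) ?_
  rintro ⟨_ | y, hy⟩
  · obtain ⟨x, hxv, hxS, hvx, hxT⟩ := hw hy
    exact ⟨⟨x, (hmem x).2 ⟨hxv, hxS⟩⟩, Adj.reachable (Or.inr ⟨hxv, hvx, hxT⟩)⟩
  by_cases hyv : y = v
  · subst hyv
    obtain ⟨t, htv, htS, htT⟩ := hu hy
    exact ⟨⟨t, (hmem t).2 ⟨htv, htS⟩⟩, Adj.reachable (Or.inr (Or.inr ⟨rfl, htv, htT⟩))⟩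
  · exact ⟨⟨y, (hmem y).2 ⟨hyv, hy⟩⟩, Reachable.rfl⟩

theorem pointSplit_induce_reachable_none_some (hu : some v ∉ S) (hw : none ∉ S) {x : V}
    (hx : some x ∉ S) (hvx : G.Adj v x) :
    ((pointSplit G v T).induce Sᶜ).Reachable ⟨none, hw⟩ ⟨some x, hx⟩ := by
  by_cases hxT : s(v, x) ∈ T
  · have hwu : ((pointSplit G v T).induce Sᶜ).Adj ⟨none, hw⟩ ⟨some v, hu⟩ := Or.inl rfl
    exact hwu.reachable.trans (Adj.reachable (Or.inr (Or.inl ⟨rfl, hvx.ne', hxT⟩)))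
  · exact Adj.reachable (Or.inr ⟨hvx.ne', hvx, hxT⟩)

theorem Connected.pointSplit_induce_of_preimage
    (hA : (G.induce (some ⁻¹' S)ᶜ).Connected) (hu : some v ∉ S) (hw : none ∉ S) :
    ((pointSplit G v T).induce Sᶜ).Connected := by
  classical
  let f (x : ↥(some ⁻¹' S)ᶜ) : ↥Sᶜ := if (x : V) = v then ⟨none, hw⟩ else ⟨some x, x.2⟩
  have hfv : f ⟨v, hu⟩ = ⟨none, hw⟩ := if_pos rfl
  have hfsome {x : ↥(some ⁻¹' S)ᶜ} (hxv : (x : V) ≠ v) : f x = ⟨some x, x.2⟩ := if_neg hxv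
  refine hA.of_adj_reachable f (fun x y hxy => ?_) ?_
  · change G.Adj x y at hxy
    by_cases hxv : (x : V) = v <;> by_cases hyv : (y : V) = v
    · exact absurd (hxv.trans hyv.symm) hxy.ne
    · obtain ⟨x, hx⟩ := x
      subst hxv
      rw [hfv, hfsome hyv]
      exact pointSplit_induce_reachable_none_some hu hw y.2 hxy
    · obtain ⟨y, hy⟩ := y
      subst hyv
      rw [hfv, hfsome hxv]
      exact (pointSplit_induce_reachable_none_some hu hw x.2 hxy.symm).symm
    · rw [hfsome hxv, hfsome hyv]
      exact Adj.reachable (Or.inl ⟨hxv, hyv, hxy⟩)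
  rintro ⟨_ | y, hy⟩
  · exact ⟨⟨v, hu⟩, hfv ▸ Reachable.rfl⟩
  by_cases hyv : y = v
  · subst hyv
    exact ⟨⟨y, hu⟩, hfv ▸ Adj.reachable (Or.inl rfl)⟩
  · exact ⟨⟨y, hy⟩, hfsome (x := ⟨y, hy⟩) hyv ▸ Reachable.rfl⟩

end SimpleGraph

/-- If G is a 3-connected simple graph and T is a set of two edges incident to a common
vertex v of degree at least 4, then the 3-point splitting graph G'_T is 3-connected. -/
theorem pointSplit_threeConnected {V : Type*} [Fintype V]
    (G : SimpleGraph V) [DecidableRel G.Adj]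
    (hconn : GraphNConnected 3 G)
    (v : V) (hdeg : 4 ≤ G.degree v)
    (T : Set (Sym2 V)) (hTE : T ⊆ G.edgeSet) (hTv : ∀ e ∈ T, v ∈ e)
    (hTcard : T.ncard = 2) :
    GraphNConnected 3 (pointSplit G v T) := by
  obtain ⟨hcard, hsep⟩ := hconn
  refine ⟨by rw [Fintype.card_option]; omega, fun S hS => ?_⟩
  have hS₀ := ncard_preimage_some_le S.toFinite
  have hN : {t | s(v, t) ∈ T}.ncard = 2 := hTcard ▸ Sym2.ncard_setOf_mk_mem hTv
  by_cases hsplit : some v ∈ S ∨ none ∈ S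
  · refine (hsep _ ?_).pointSplit_induce_of_insert_preimage (fun hu => ?_) (fun hw => ?_)
    · rcases hsplit with hu | hw
      · rw [insert_eq_of_mem (show v ∈ some ⁻¹' S from hu)]
        omega
      · have := ncard_preimage_some_add_one_le S.toFinite hw
        have := ncard_insert_le v (some ⁻¹' S)
        omega
    · have := ncard_preimage_some_add_one_le S.toFinite (hsplit.resolve_left hu)
      obtain ⟨t, htT, htS⟩ := exists_mem_notMem_of_ncard_lt_ncard (s := some ⁻¹' S)
        (t := {t | s(v, t) ∈ T}) (by omega)
      exact ⟨t, (G.mem_edgeSet.mp (hTE htT)).ne', htS, htT⟩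
    · have hv : v ∈ some ⁻¹' S := hsplit.resolve_right hw
      have := ncard_sdiff_singleton_of_mem hv
      have := ncard_union_le (some ⁻¹' S \ {v}) {t | s(v, t) ∈ T}
      obtain ⟨x, hvx, hx⟩ := SimpleGraph.exists_adj_notMem_of_ncard_lt_degree (G := G) (a := v)
        (B := (some ⁻¹' S \ {v}) ∪ {t | s(v, t) ∈ T}) (by omega)
      simp only [mem_union, mem_sdiff, mem_singleton_iff, not_or, not_and_not_right] at hx
      exact ⟨x, hvx.ne', fun h => hvx.ne' (hx.1 h), hvx, hx.2⟩
  · rw [not_or] at hsplit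
    exact (hsep _ (by omega)).pointSplit_induce_of_preimage hsplit.1 hsplit.2
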